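/- Let v ∈ ℝ^n with Σ_i v_i = 0, and let π be a uniformly random permutation. Then Var_π(⟨π(v), v⟩) ≤ ‖v‖⁴·(2/(n−1)); hence by Chebyshev, with probability at least 1 − δ, |⟨π(v), v⟩| ≤ ‖v‖²·√(2/((n−1)δ)) + ‖v‖²/(n−1). -/

import Mathlib

/-!
Write `X π = ∑ i, v (π i) * v i`. Expanding `X π ^ 2` and summing over `π` leaves the pair sums
`∑ π, v (π i) * v (π k)`, which by 2-transitivity of the symmetric group take one value `U` on the
diagonal and one value `T` off it. Counting gives `n U = n! ‖v‖²`, and centering gives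
`U + (n - 1) T = 0`, so `∑ π, X π ^ 2 = ‖v‖² (U - T) = n! ‖v‖⁴ / (n - 1)`. The variance is at most
this second moment divided by `n!`, and the deviation bound is Chebyshev's inequality, counted.
-/

open Finset Nat

namespace Equiv.Perm

variable {α R : Type*} [Fintype α] [DecidableEq α]

theorem sum_apply_eq_sum_apply [AddCommMonoid R] (h : α → R) (i j : α) :
    ∑ π : Perm α, h (π i) = ∑ π : Perm α, h (π j) := by
  conv_lhs => rw [← swap_apply_left j i]
  exact Equiv.sum_comp (Equiv.mulRight (swap j i)) fun π => h (π j)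

theorem sum_apply_apply_eq_of_ne [AddCommMonoid R] (g : α → α → R) {i k i' k' : α}
    (hik : i ≠ k) (hik' : i' ≠ k') :
    ∑ π : Perm α, g (π i') (π k') = ∑ π : Perm α, g (π i) (π k) := by
  obtain ⟨σ, rfl, rfl⟩ :=
    MulAction.is_two_pretransitive_iff.mp (isMultiplyPretransitive α 2) hik hik'
  exact Equiv.sum_comp (Equiv.mulRight σ) fun π => g (π i) (π k)

theorem card_nsmul_sum_apply [AddCommMonoid R] (h : α → R) (i : α) :
    Fintype.card α • ∑ π : Perm α, h (π i) = (Fintype.card α)! • ∑ x, h x := by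
  calc Fintype.card α • ∑ π : Perm α, h (π i)
      = ∑ j : α, ∑ π : Perm α, h (π j) := by
        rw [← Finset.card_univ, ← sum_const]
        exact sum_congr rfl fun j _ => sum_apply_eq_sum_apply h i j
    _ = ∑ π : Perm α, ∑ j, h (π j) := sum_comm
    _ = (Fintype.card α)! • ∑ x, h x := by
        simp only [Equiv.sum_comp, sum_const, Finset.card_univ, Fintype.card_perm]

theorem sum_sq_sum_apply_mul [CommSemiring R] (v w : α → R) :
    ∑ π : Perm α, (∑ i, v (π i) * w i) ^ 2
      = ∑ i, ∑ k, w i * w k * ∑ π : Perm α, v (π i) * v (π k) := by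
  simp_rw [sq, sum_mul_sum, mul_sum]
  rw [sum_comm]
  refine sum_congr rfl fun i _ => ?_
  rw [sum_comm]
  exact sum_congr rfl fun k _ => sum_congr rfl fun π _ => by ring

variable [CommRing R] {v : α → R}

theorem card_sub_one_mul_sum_apply_mul_apply (hv : ∑ x, v x = 0) {i k : α} (hik : i ≠ k) :
    ((Fintype.card α : R) - 1) * ∑ π : Perm α, v (π i) * v (π k)
      = -∑ π : Perm α, v (π i) ^ 2 := by
  have hcard : ((Fintype.card α : R) - 1) = #(univ.erase i) := by
    rw [card_erase_of_mem (mem_univ i), Finset.card_univ,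
      Nat.cast_sub (Fintype.card_pos_iff.mpr ⟨i⟩), Nat.cast_one]
  calc ((Fintype.card α : R) - 1) * ∑ π : Perm α, v (π i) * v (π k)
      = ∑ k' ∈ univ.erase i, ∑ π : Perm α, v (π i) * v (π k') := by
        rw [hcard, ← nsmul_eq_mul, ← sum_const]
        exact sum_congr rfl fun k' hk' =>
          (sum_apply_apply_eq_of_ne (fun a b => v a * v b) hik (ne_of_mem_erase hk').symm).symm
    _ = ∑ π : Perm α, v (π i) * ∑ k' ∈ univ.erase i, v (π k') := by
        rw [sum_comm]; simp only [mul_sum]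
    _ = -∑ π : Perm α, v (π i) ^ 2 := by
        simp only [sum_erase_eq_sub (mem_univ i), Equiv.sum_comp, hv, ← sum_neg_distrib]
        exact sum_congr rfl fun π _ => by ring

theorem card_sub_one_mul_sum_sq_sum_apply_mul_self [Nontrivial α] (hv : ∑ x, v x = 0) :
    ((Fintype.card α : R) - 1) * ∑ π : Perm α, (∑ i, v (π i) * v i) ^ 2
      = (Fintype.card α)! * (∑ i, v i ^ 2) ^ 2 := by
  obtain ⟨i₀, k₀, h₀⟩ := exists_pair_ne α
  set U := ∑ π : Perm α, v (π i₀) ^ 2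
  set T := ∑ π : Perm α, v (π i₀) * v (π k₀)
  have hdiag : (Fintype.card α : R) * U = (Fintype.card α)! * ∑ i, v i ^ 2 := by
    simpa only [nsmul_eq_mul] using card_nsmul_sum_apply (fun x => v x ^ 2) i₀
  have hoff : ((Fintype.card α : R) - 1) * T = -U :=
    card_sub_one_mul_sum_apply_mul_apply hv h₀
  have hrow (i : α) :
      ∑ k, v i * v k * ∑ π : Perm α, v (π i) * v (π k) = v i ^ 2 * (U - T) := by
    have hU : ∑ π : Perm α, v (π i) * v (π i) = U := by
      simp only [← sq]
      exact sum_apply_eq_sum_apply (fun x => v x ^ 2) i i₀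
    have hT (k : α) (hk : k ∈ univ.erase i) :
        v i * v k * ∑ π : Perm α, v (π i) * v (π k) = v i * T * v k := by
      rw [sum_apply_apply_eq_of_ne (fun a b => v a * v b) h₀ (ne_of_mem_erase hk).symm]
      ring
    rw [← add_sum_erase _ _ (mem_univ i), hU, sum_congr rfl hT, ← mul_sum,
      sum_erase_eq_sub (mem_univ i), hv]
    ring
  rw [sum_sq_sum_apply_mul, sum_congr rfl fun i _ => hrow i, ← sum_mul]
  linear_combination (∑ i, v i ^ 2) * hdiag - (∑ i, v i ^ 2) * hoff

end Equiv.Perm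

theorem Fintype.card_sub_le_natCard_abs_le_of_sum_sq_le {ι : Type*} [Fintype ι] (f : ι → ℝ)
    {t ε : ℝ} (ht : 0 ≤ t) (hε : 0 ≤ ε) (h : ∑ x, f x ^ 2 ≤ ε * t ^ 2) :
    (Fintype.card ι : ℝ) - ε ≤ Nat.card {x // |f x| ≤ t} := by
  classical
  have hbad : (#{x | t < |f x|} : ℝ) ≤ ε := by
    rcases eq_empty_or_nonempty {x | t < |f x|} with hempty | hne
    · rwa [hempty, Finset.card_empty, Nat.cast_zero]
    have hlt : #{x | t < |f x|} • t ^ 2 < ∑ x ∈ {x | t < |f x|}, f x ^ 2 := by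
      rw [← sum_const]
      refine sum_lt_sum_of_nonempty hne fun x hx => ?_
      rw [← sq_abs (f x)]
      exact pow_lt_pow_left₀ (mem_filter.mp hx).2 ht two_ne_zero
    rw [nsmul_eq_mul] at hlt
    have hlt' := hlt.trans_le ((sum_le_sum_of_subset_of_nonneg (subset_univ _)
      fun x _ _ => sq_nonneg (f x)).trans h)
    exact (lt_of_mul_lt_mul_right hlt' (sq_nonneg t)).le
  have hsplit := card_filter_add_card_filter_not (s := univ) (fun x => |f x| ≤ t)
  rw [Nat.card_eq_fintype_card, Fintype.card_subtype, ← Finset.card_univ]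
  simp only [not_le] at hsplit
  rw [← hsplit, Nat.cast_add]
  linarith

/-- Variance bound and Chebyshev-type deviation bound for the inner product between a
centered vector and a uniformly random permutation of itself. -/
theorem variance_inner_product_random_permutation
    (n : ℕ) (hn : 2 ≤ n) (v : Fin n → ℝ) (hc : ∑ i, v i = 0) :
    (∑ π : Equiv.Perm (Fin n), (∑ i, v (π i) * v i) ^ 2) / (Nat.factorial n : ℝ)
      - ((∑ π : Equiv.Perm (Fin n), ∑ i, v (π i) * v i) / (Nat.factorial n : ℝ)) ^ 2
      ≤ (∑ i, (v i) ^ 2) ^ 2 * (2 / ((n : ℝ) - 1)) ∧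
    ∀ δ : ℝ, 0 < δ → δ ≤ 1 →
      (1 - δ) * (Nat.factorial n : ℝ) ≤
        (Nat.card {π : Equiv.Perm (Fin n) //
          |∑ i, v (π i) * v i| ≤ (∑ i, (v i) ^ 2) * Real.sqrt (2 / (((n : ℝ) - 1) * δ))
            + (∑ i, (v i) ^ 2) / ((n : ℝ) - 1)} : ℝ) := by
  have : Nontrivial (Fin n) := Fin.nontrivial_iff_two_le.mpr hn
  set S := ∑ i, v i ^ 2
  have hn1 : (0 : ℝ) < n - 1 := by
    have : (2 : ℝ) ≤ n := by exact_mod_cast hn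
    linarith
  have hmoment :
      ∑ π : Equiv.Perm (Fin n), (∑ i, v (π i) * v i) ^ 2 = n ! * S ^ 2 / (n - 1) := by
    rw [eq_div_iff hn1.ne', mul_comm]
    simpa using Equiv.Perm.card_sub_one_mul_sum_sq_sum_apply_mul_self (R := ℝ) hc
  constructor
  · have hmean := sq_nonneg ((∑ π : Equiv.Perm (Fin n), ∑ i, v (π i) * v i) / n !)
    have h2 : S ^ 2 / (n - 1) ≤ S ^ 2 * (2 / (n - 1)) := by
      rw [mul_div_assoc']
      gcongr
      linarith [sq_nonneg S]
    rw [hmoment, mul_div_assoc, mul_div_cancel_left₀ _ (by positivity)]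
    linarith
  · intro δ hδ _
    set t₀ := S * √(2 / ((n - 1) * δ))
    have hcheb : ∑ π : Equiv.Perm (Fin n), (∑ i, v (π i) * v i) ^ 2
        ≤ δ * n ! * (t₀ + S / (n - 1)) ^ 2 := by
      have ht₀_sq : δ * n ! * t₀ ^ 2 = 2 * (n ! * S ^ 2 / (n - 1)) := by
        rw [mul_pow, Real.sq_sqrt (by positivity)]
        field_simp
      have hslack : 0 ≤ S / (n - 1) := by positivity
      have hmono : t₀ ^ 2 ≤ (t₀ + S / (n - 1)) ^ 2 := by gcongr; linarith
      have hδn : 0 ≤ δ * n ! := by positivity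
      rw [hmoment]
      nlinarith [mul_le_mul_of_nonneg_left hmono hδn]
    have hgood :=
      Fintype.card_sub_le_natCard_abs_le_of_sum_sq_le _ (by positivity) (by positivity) hcheb
    rw [Fintype.card_perm, Fintype.card_fin] at hgood
    linarith
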